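/- For vector spaces with linear Dirac structures L_k = L(E_k, ε_k), a linear map f : V₁ → V₂ is a linear dual-Dirac map (i.e. f* : (V₂*, L₂) → (V₁*, L₁) is a linear Dirac map) if and only if (D1*) f(E₁) ⊆ E₂ and (D2*) ε₁ = f*ε₂ on E₁, i.e. ε₁(x, y) = ε₂(fx, fy) for all x, y ∈ E₁. -/

import Mathlib

/-- The canonical pairing on `V ⊕ V*`: `⟨X+ξ, Y+η⟩ = η(X) + ξ(Y)`. -/
def diracPair {K V : Type*} [Field K] [AddCommGroup V] [Module K V]
    (p q : V × Module.Dual K V) : K :=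
  q.2 p.1 + p.2 q.1

/-- A linear Dirac structure: a subset of `V ⊕ V*` equal to its own orthogonal
complement with respect to the canonical pairing (hence automatically a maximal
isotropic linear subspace). -/
def IsDirac {K V : Type*} [Field K] [AddCommGroup V] [Module K V]
    (L : Set (V × Module.Dual K V)) : Prop :=
  ∀ p, p ∈ L ↔ ∀ q ∈ L, diracPair p q = 0

/-- A linear Dirac map: (M1) `f(L₁ ∩ V₁) ⊆ L₂ ∩ V₂` and (M2′) whenever
`Y + ξ ∈ L₂` and `X + f*ξ ∈ L₁`, then `fX + ξ ∈ L₂`. -/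
def IsDiracMap {K V₁ V₂ : Type*} [Field K]
    [AddCommGroup V₁] [Module K V₁] [AddCommGroup V₂] [Module K V₂]
    (f : V₁ →ₗ[K] V₂)
    (L₁ : Set (V₁ × Module.Dual K V₁)) (L₂ : Set (V₂ × Module.Dual K V₂)) : Prop :=
  (∀ x : V₁, (x, (0 : Module.Dual K V₁)) ∈ L₁ →
      (f x, (0 : Module.Dual K V₂)) ∈ L₂) ∧
  (∀ (X : V₁) (Y : V₂) (ξ : Module.Dual K V₂),
      (Y, ξ) ∈ L₂ → (X, f.dualMap ξ) ∈ L₁ → (f X, ξ) ∈ L₂)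

/-- `L(E, ε) = {x + ξ ∈ E ⊕ V* : ξ|_E = ε(x, −)}` for a subspace `E ⊆ V` and a
bilinear form `ε` on `E`. -/
def LSub {K V : Type*} [Field K] [AddCommGroup V] [Module K V]
    (E : Submodule K V) (ε : E →ₗ[K] E →ₗ[K] K) :
    Set (V × Module.Dual K V) :=
  {p | ∃ hx : p.1 ∈ E, ∀ y : E, p.2 y = ε ⟨p.1, hx⟩ y}

/-- A Dirac structure on `V` viewed as a Dirac structure on `V*` via the canonical
identification `V ⊕ V* ≅ V* ⊕ V**`. -/
def dualizeDirac {K V : Type*} [Field K] [AddCommGroup V] [Module K V]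
    (L : Set (V × Module.Dual K V)) :
    Set (Module.Dual K V × Module.Dual K (Module.Dual K V)) :=
  {q | ∃ p ∈ L, q = (p.2, Module.Dual.eval K V p.1)}

/-- `f : (V₁, L₁) → (V₂, L₂)` is a linear dual-Dirac map if the transpose
`f* : (V₂*, L₂) → (V₁*, L₁)` is a linear Dirac map. -/
def IsDualDiracMap {K V₁ V₂ : Type*} [Field K]
    [AddCommGroup V₁] [Module K V₁] [AddCommGroup V₂] [Module K V₂]
    (f : V₁ →ₗ[K] V₂)
    (L₁ : Set (V₁ × Module.Dual K V₁)) (L₂ : Set (V₂ × Module.Dual K V₂)) : Prop :=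
  IsDiracMap f.dualMap (dualizeDirac L₂) (dualizeDirac L₁)

lemma evalInjAux {K V : Type*} [Field K] [AddCommGroup V] [Module K V] (a b : V)
    (h : Module.Dual.eval K V a = Module.Dual.eval K V b) : a = b := by
  rw [← sub_eq_zero, ← Module.forall_dual_apply_eq_zero_iff K]
  intro φ
  have := LinearMap.congr_fun h φ
  rw [Module.Dual.eval_apply, Module.Dual.eval_apply] at this
  simp [map_sub, this]

/-- For Dirac structures `L_k = L(E_k, ε_k)`, a linear map `f` is a linear dual-Dirac
map iff (D1*) `f(E₁) ⊆ E₂` and (D2*) `ε₁ = f*ε₂` on `E₁`. -/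
theorem isDualDiracMap_iff_D1star_D2star
    {K V₁ V₂ : Type*} [Field K]
    [AddCommGroup V₁] [Module K V₁] [FiniteDimensional K V₁]
    [AddCommGroup V₂] [Module K V₂] [FiniteDimensional K V₂]
    (h2 : (2 : K) ≠ 0)
    (f : V₁ →ₗ[K] V₂)
    (E₁ : Submodule K V₁) (ε₁ : E₁ →ₗ[K] E₁ →ₗ[K] K) (hε₁ : ∀ x : E₁, ε₁ x x = 0)
    (E₂ : Submodule K V₂) (ε₂ : E₂ →ₗ[K] E₂ →ₗ[K] K) (hε₂ : ∀ x : E₂, ε₂ x x = 0) :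
    IsDualDiracMap f (LSub E₁ ε₁) (LSub E₂ ε₂) ↔
      ∃ hD1 : ∀ x : E₁, f (x : V₁) ∈ E₂,
        ∀ x y : E₁, ε₁ x y = ε₂ ⟨f (x : V₁), hD1 x⟩ ⟨f (y : V₁), hD1 y⟩ := by

  classical
  constructor
  · rintro ⟨hM1, hM2⟩
    -- D1: f maps E₁ into E₂
    have hD1 : ∀ x : E₁, f (x : V₁) ∈ E₂ := by
      intro x
      by_contra hfx
      obtain ⟨ξ, hξx, hξE⟩ := E₂.exists_dual_map_eq_bot_of_notMem hfx inferInstance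
      have hmem : ((ξ, (0 : Module.Dual K (Module.Dual K V₂))) :
          Module.Dual K V₂ × Module.Dual K (Module.Dual K V₂)) ∈
          dualizeDirac (LSub E₂ ε₂) := by
        refine ⟨((0 : V₂), ξ), ⟨E₂.zero_mem, fun y => ?_⟩, by simp⟩
        have hy : ξ (y : V₂) = 0 := by
          have : ξ (y : V₂) ∈ E₂.map ξ := ⟨y, y.2, rfl⟩
          rw [hξE] at this; exact (Submodule.mem_bot K).mp this
        have h0 : ε₂ ⟨(0 : V₂), E₂.zero_mem⟩ y = 0 := by
          show ε₂ (0 : E₂) y = 0; simp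
        rw [hy, h0]
      obtain ⟨p, ⟨hp1, hp2⟩, heq⟩ := hM1 ξ hmem
      have hfst : f.dualMap ξ = p.2 := congrArg Prod.fst heq
      have hsnd : (0 : Module.Dual K (Module.Dual K V₁)) = Module.Dual.eval K V₁ p.1 :=
        congrArg Prod.snd heq
      have hp0 : p.1 = 0 := evalInjAux (K := K) p.1 0 (by rw [map_zero]; exact hsnd.symm)
      have hx0 : ξ (f (x : V₁)) = 0 := by
        have h1 : p.2 (x : V₁) = ε₁ ⟨p.1, hp1⟩ x := hp2 x
        have h2 : (⟨p.1, hp1⟩ : E₁) = 0 := by ext; simp [hp0]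
        rw [h2] at h1
        simp only [map_zero, LinearMap.zero_apply] at h1
        have := hfst ▸ h1
        simpa using this
      exact hξx hx0
    -- D2
    refine ⟨hD1, fun x y => ?_⟩
    set Y : Module.Dual K V₁ := Subspace.dualLift E₁ (ε₁ x) with hYdef
    set Ξ : Module.Dual K V₂ := Subspace.dualLift E₂ (ε₂ ⟨f (x : V₁), hD1 x⟩) with hΞdef
    have hY : ∀ z : E₁, Y (z : V₁) = ε₁ x z := fun z =>
      Subspace.dualLift_of_mem z.2
    have hΞ : ∀ z : E₂, Ξ (z : V₂) = ε₂ ⟨f (x : V₁), hD1 x⟩ z := fun z =>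
      Subspace.dualLift_of_mem z.2
    have h1 : ((Y, Module.Dual.eval K V₁ (x : V₁)) :
        Module.Dual K V₁ × Module.Dual K (Module.Dual K V₁)) ∈
        dualizeDirac (LSub E₁ ε₁) :=
      ⟨((x : V₁), Y), ⟨x.2, fun z => by rw [hY z]⟩, rfl⟩
    have h2' : ((Ξ, f.dualMap.dualMap (Module.Dual.eval K V₁ (x : V₁))) :
        Module.Dual K V₂ × Module.Dual K (Module.Dual K V₂)) ∈
        dualizeDirac (LSub E₂ ε₂) := by
      refine ⟨(f (x : V₁), Ξ), ⟨hD1 x, fun z => by rw [hΞ z]⟩, ?_⟩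
      refine Prod.ext rfl ?_
      ext φ
      simp [Module.Dual.eval_apply]
    obtain ⟨p, ⟨hp1, hp2⟩, heq⟩ := hM2 Ξ Y (Module.Dual.eval K V₁ (x : V₁)) h1 h2'
    have hfst : f.dualMap Ξ = p.2 := congrArg Prod.fst heq
    have hsnd : Module.Dual.eval K V₁ (x : V₁) = Module.Dual.eval K V₁ p.1 :=
      congrArg Prod.snd heq
    have hpx : p.1 = (x : V₁) := (evalInjAux (K := K) _ _ hsnd).symm
    have key : Ξ (f (y : V₁)) = ε₁ x y := by
      have h1 : p.2 (y : V₁) = ε₁ ⟨p.1, hp1⟩ y := hp2 y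
      have h2 : (⟨p.1, hp1⟩ : E₁) = x := by ext; simp [hpx]
      rw [h2] at h1
      have := hfst ▸ h1
      simpa using this
    rw [← key]
    exact hΞ ⟨f (y : V₁), hD1 y⟩
  · rintro ⟨hD1, hD2⟩
    constructor
    · rintro ξ ⟨p, ⟨hp1, hp2⟩, heq⟩
      have hξ : ξ = p.2 := congrArg Prod.fst heq
      have hsnd : (0 : Module.Dual K (Module.Dual K V₂)) = Module.Dual.eval K V₂ p.1 :=
        congrArg Prod.snd heq
      have hp0 : p.1 = 0 := evalInjAux (K := K) p.1 0 (by rw [map_zero]; exact hsnd.symm)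
      refine ⟨((0 : V₁), f.dualMap ξ), ⟨E₁.zero_mem, fun z => ?_⟩, by simp⟩
      have h1 : p.2 (f (z : V₁)) = ε₂ ⟨p.1, hp1⟩ ⟨f (z : V₁), hD1 z⟩ :=
        hp2 ⟨f (z : V₁), hD1 z⟩
      have h2 : (⟨p.1, hp1⟩ : E₂) = 0 := by ext; simp [hp0]
      rw [h2] at h1
      simp only [map_zero, LinearMap.zero_apply] at h1
      have h3 : ξ (f (z : V₁)) = 0 := by rw [hξ]; exact h1
      have h0 : ε₁ ⟨(0 : V₁), E₁.zero_mem⟩ z = 0 := by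
        show ε₁ (0 : E₁) z = 0; simp
      rw [h0]
      simpa using h3
    · rintro Ξ Y ξ ⟨p, ⟨hp1, hp2⟩, heqp⟩ ⟨q, ⟨hq1, hq2⟩, heqq⟩
      have hΞ : Ξ = q.2 := congrArg Prod.fst heqq
      have hξ : ξ = Module.Dual.eval K V₁ p.1 := congrArg Prod.snd heqp
      have hq1' : q.1 = f p.1 := by
        have hsnd : f.dualMap.dualMap ξ = Module.Dual.eval K V₂ q.1 :=
          congrArg Prod.snd heqq
        refine evalInjAux (K := K) q.1 (f p.1) ?_
        rw [← hsnd, hξ]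
        ext φ
        simp [Module.Dual.eval_apply]
      refine ⟨(p.1, f.dualMap Ξ), ⟨hp1, fun z => ?_⟩, by rw [hξ]⟩
      have h1 : q.2 (f (z : V₁)) = ε₂ ⟨q.1, hq1⟩ ⟨f (z : V₁), hD1 z⟩ :=
        hq2 ⟨f (z : V₁), hD1 z⟩
      have h2 : (⟨q.1, hq1⟩ : E₂) = ⟨f p.1, hD1 ⟨p.1, hp1⟩⟩ := by ext; simp [hq1']
      rw [h2] at h1
      have h3 := h1.trans (hD2 ⟨p.1, hp1⟩ z).symm
      rw [← hΞ] at h3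
      simpa using h3
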